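/- Let $n\in\mathbb{N}$ and $1\le p,q,r\le\infty$. Then the unit ball $B_\pi^n$ of the projective tensor product $\ell_p^n\otimes_\pi\ell_q^n\otimes_\pi\ell_r^n$ (a convex body in $\mathbb{R}^{n^3}$) satisfies $\mathrm{vol}_{n^3}(B_\pi^n)^{1/n^3} \ge n^{-\min(1/p,1/2)-\min(1/q,1/2)-1/r-1}$. -/

import Mathlib

open Finset
open scoped ENNReal NNReal

/-- The `ℓ_p` norm on `ℝ^n` for an extended real exponent `p`
(with `pnorm ∞ x = max_i |x i|`). -/
noncomputable def pnorm (p : ℝ≥0∞) {n : ℕ} (x : Fin n → ℝ) : ℝ :=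
  if p = ∞ then ⨆ i, |x i| else (∑ i, |x i| ^ p.toReal) ^ (1 / p.toReal)

open MeasureTheory

/-- The projective tensor norm on `ℝ^n ⊗ ℝ^n ⊗ ℝ^n ≅ ℝ^{n³}` induced by
`ℓ_p^n, ℓ_q^n, ℓ_r^n`. -/
noncomputable def projNorm3 (p q r : ℝ≥0∞) {n : ℕ} (A : Fin n → Fin n → Fin n → ℝ) : ℝ :=
  sInf {t : ℝ | ∃ (m : ℕ) (x y z : Fin m → Fin n → ℝ),
    (∀ i j k, A i j k = ∑ s, x s i * y s j * z s k) ∧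
    t = ∑ s, pnorm p (x s) * pnorm q (y s) * pnorm r (z s)}

/-!
The ball contains the convex hull of the elementary tensors `x ⊗ y ⊗ z` in which `x` and `y` are
either basis vectors or normalized sign vectors `n^{-1/p} ε`, and `z` is a normalized sign vector;
all of them have `‖x‖_p ‖y‖_q ‖z‖_r = 1`. By Hahn–Banach, the cube `ρ B_∞` lies in this hull as
soon as every tensor `B` satisfies `ρ ‖B‖₁ ≤ max ⟨x ⊗ y ⊗ z, B⟩`. This `ℓ₁` bound is obtained
one slot at a time: in the last slot one picks the signs of the entries, in the other two one either
sums over the `n` basis vectors or averages over all sign vectors. The averaging step is the `ℓ₁`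
Khintchine inequality `∑ |aᵢ| ≤ √(2n) · 𝔼 |∑ εᵢ aᵢ|`; averaging `a` over its cyclic shifts reduces
it to the constant vector, i.e. to `𝔼 |ε₁ + ⋯ + εₙ| ≥ √(n/2)`, which follows from the closed form
of this expectation in terms of central binomial coefficients. With `α` the exponent of the
theorem, the constants multiply to `2 n^α`, so the cube of side `n^{-α}` lies in the ball.
-/

section pnorm

variable {n : ℕ} {p : ℝ≥0∞}

lemma pnorm_nonneg (x : Fin n → ℝ) : 0 ≤ pnorm p x := by
  unfold pnorm
  split_ifs
  · exact Real.iSup_nonneg fun i => abs_nonneg _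
  · positivity

lemma pnorm_smul (hp : p ≠ 0) (c : ℝ) (x : Fin n → ℝ) : pnorm p (c • x) = |c| * pnorm p x := by
  unfold pnorm
  split_ifs with hp'
  · simp only [Pi.smul_apply, smul_eq_mul, abs_mul, Real.mul_iSup_of_nonneg (abs_nonneg c)]
  · have ht : p.toReal ≠ 0 := (ENNReal.toReal_pos hp hp').ne'
    simp only [Pi.smul_apply, smul_eq_mul, abs_mul, Real.mul_rpow (abs_nonneg _) (abs_nonneg _),
      ← mul_sum]
    rw [Real.mul_rpow (by positivity) (by positivity), one_div,
      Real.rpow_rpow_inv (abs_nonneg _) ht]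

def signVec (t : Finset (Fin n)) : Fin n → ℝ := fun i => if i ∈ t then 1 else -1

lemma abs_signVec (t : Finset (Fin n)) (i : Fin n) : |signVec t i| = 1 := by
  unfold signVec; split_ifs <;> norm_num

lemma pnorm_signVec (hn : n ≠ 0) (t : Finset (Fin n)) :
    pnorm p (signVec t) = (n : ℝ) ^ (1 / p).toReal := by
  have : Nonempty (Fin n) := ⟨⟨0, Nat.pos_of_ne_zero hn⟩⟩
  unfold pnorm
  split_ifs with hp
  · simp [hp, abs_signVec]
  · simp [abs_signVec, ENNReal.toReal_inv]

lemma pnorm_single (hp : p ≠ 0) (i : Fin n) : pnorm p (Pi.single i 1) = 1 := by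
  have : Nonempty (Fin n) := ⟨i⟩
  unfold pnorm
  split_ifs with hp'
  · apply le_antisymm
    · exact ciSup_le fun j => by by_cases h : j = i <;> simp [h]
    · exact (le_ciSup (Set.finite_range _).bddAbove i).trans_eq' (by simp)
  · have ht : p.toReal ≠ 0 := (ENNReal.toReal_pos hp hp').ne'
    have : ∀ j, |(Pi.single i 1 : Fin n → ℝ) j| ^ p.toReal = (Pi.single i 1 : Fin n → ℝ) j :=
      fun j => by by_cases h : j = i <;> simp [h, Real.zero_rpow ht]
    simp [this]

end pnorm

section projNorm3

variable {n : ℕ} {p q r : ℝ≥0∞}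

def tmul3 (x y z : Fin n → ℝ) : Fin n → Fin n → Fin n → ℝ := fun i j k => x i * y j * z k

lemma smul_tmul3 (c : ℝ) (x y z : Fin n → ℝ) : c • tmul3 x y z = tmul3 (c • x) y z := by
  ext i j k
  simp only [tmul3, Pi.smul_apply, smul_eq_mul]
  ring

lemma projNorm3_le_sum {ι : Type*} [Fintype ι] (x y z : ι → Fin n → ℝ)
    {A : Fin n → Fin n → Fin n → ℝ} (hA : A = ∑ s, tmul3 (x s) (y s) (z s)) :
    projNorm3 p q r A ≤ ∑ s, pnorm p (x s) * pnorm q (y s) * pnorm r (z s) := by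
  let e := (Fintype.equivFin ι).symm
  refine csInf_le ⟨0, ?_⟩ ⟨Fintype.card ι, x ∘ e, y ∘ e, z ∘ e, fun i j k => ?_, ?_⟩
  · rintro t ⟨m, x, y, z, -, rfl⟩
    exact sum_nonneg fun s _ =>
      mul_nonneg (mul_nonneg (pnorm_nonneg _) (pnorm_nonneg _)) (pnorm_nonneg _)
  · simp only [hA, Finset.sum_apply, tmul3]
    exact (e.sum_comp fun s => x s i * y s j * z s k).symm
  · exact (e.sum_comp fun s => pnorm p (x s) * pnorm q (y s) * pnorm r (z s)).symm

lemma projNorm3_le_one_of_mem_convexHull (hp : p ≠ 0) {S : Finset (Fin n → Fin n → Fin n → ℝ)}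
    (hS : ∀ s ∈ S, ∃ x y z, s = tmul3 x y z ∧ pnorm p x * pnorm q y * pnorm r z ≤ 1)
    {A : Fin n → Fin n → Fin n → ℝ} (hA : A ∈ convexHull ℝ (S : Set _)) :
    projNorm3 p q r A ≤ 1 := by
  obtain ⟨w, hw0, hw1, rfl⟩ := mem_convexHull'.mp hA
  choose! x y z hxyz hcost using hS
  have hdecomp : ∑ s ∈ S, w s • s = ∑ s : S, tmul3 (w s • x s) (y s) (z s) := by
    rw [← sum_coe_sort]
    exact sum_congr rfl fun s _ => by rw [← smul_tmul3, ← hxyz s s.2]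
  calc projNorm3 p q r (∑ s ∈ S, w s • s)
      ≤ ∑ s : S, pnorm p (w s • x s) * pnorm q (y s) * pnorm r (z s) :=
        projNorm3_le_sum (fun s : S => w s • x s) (fun s => y s) (fun s => z s) hdecomp
    _ ≤ ∑ s : S, w s := sum_le_sum fun s _ => by
        rw [pnorm_smul hp, abs_of_nonneg (hw0 s s.2), mul_assoc, mul_assoc, ← mul_assoc (pnorm p _)]
        exact mul_le_of_le_one_right (hw0 s s.2) (hcost s s.2)
    _ = 1 := by rw [sum_coe_sort, hw1]

end projNorm3

lemma mem_convexHull_of_forall_le {E : Type*} [TopologicalSpace E] [AddCommGroup E] [Module ℝ E]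
    [IsTopologicalAddGroup E] [ContinuousSMul ℝ E] [LocallyConvexSpace ℝ E] [T2Space E]
    {S : Finset E} {x : E} (h : ∀ (f : StrongDual ℝ E) (u : ℝ), (∀ s ∈ S, f s ≤ u) → f x ≤ u) :
    x ∈ convexHull ℝ (S : Set E) := by
  by_contra hx
  obtain ⟨f, u, hf, hu⟩ := geometric_hahn_banach_closed_point (convex_convexHull ℝ _)
    (S.finite_toSet.isClosed_convexHull ℝ) hx
  exact (h f u fun s hs => (hf s (subset_convexHull ℝ _ hs)).le).not_gt hu

section duality

variable {n : ℕ}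

lemma eq_sum_smul_tmul3_single (A : Fin n → Fin n → Fin n → ℝ) :
    A = ∑ i, ∑ j, ∑ k, A i j k • tmul3 (Pi.single i 1) (Pi.single j 1) (Pi.single k 1) := by
  ext i j k
  simp [Finset.sum_apply, tmul3, Pi.single_apply]

lemma strongDual_apply_eq_sum (f : StrongDual ℝ (Fin n → Fin n → Fin n → ℝ))
    (A : Fin n → Fin n → Fin n → ℝ) :
    f A = ∑ i, ∑ j, ∑ k, A i j k * f (tmul3 (Pi.single i 1) (Pi.single j 1) (Pi.single k 1)) := by
  conv_lhs => rw [eq_sum_smul_tmul3_single A]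
  simp only [map_sum, map_smul, smul_eq_mul]

end duality

section signSum

/-- `2^n` times the expected absolute value of a sum of `n` independent random signs. -/
def absSignSum (n : ℕ) : ℕ := ∑ t ∈ (range n).powerset, (2 * (#t : ℤ) - n).natAbs

def balancedCount (n : ℕ) : ℕ := #{t ∈ (range n).powerset | 2 * #t = n}

lemma absSignSum_succ (n : ℕ) :
    absSignSum (n + 1) = 2 * absSignSum n + 2 * balancedCount n := by
  rw [absSignSum, range_add_one, sum_powerset_insert notMem_range_self, ← sum_add_distrib,
    absSignSum, balancedCount, card_filter, mul_sum, mul_sum, ← sum_add_distrib]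
  refine sum_congr rfl fun t ht => ?_
  rw [card_insert_of_notMem fun h => notMem_range_self (mem_powerset.1 ht h)]
  split_ifs <;> omega

lemma balancedCount_two_mul (k : ℕ) : balancedCount (2 * k) = k.centralBinom := by
  rw [balancedCount, Nat.centralBinom_eq_two_mul_choose, ← card_range (2 * k),
    ← card_powersetCard, powersetCard_eq_filter, card_range]
  congr 1
  exact filter_congr fun t _ => by omega

lemma balancedCount_two_mul_add_one (k : ℕ) : balancedCount (2 * k + 1) = 0 := by
  rw [balancedCount, card_eq_zero, filter_eq_empty_iff]
  intro t _
  omega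

lemma absSignSum_two_mul (k : ℕ) :
    absSignSum (2 * k) = 2 * k * k.centralBinom ∧
      absSignSum (2 * k + 1) = 2 * (2 * k + 1) * k.centralBinom := by
  induction k with
  | zero => decide
  | succ k ih =>
    have hrec := Nat.succ_mul_centralBinom_succ k
    have heven : absSignSum (2 * (k + 1)) = 2 * (k + 1) * (k + 1).centralBinom := by
      rw [show 2 * (k + 1) = 2 * k + 1 + 1 by ring, absSignSum_succ, ih.2,
        balancedCount_two_mul_add_one]
      linarith
    refine ⟨heven, ?_⟩
    rw [absSignSum_succ, heven, balancedCount_two_mul]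
    ring

lemma sixteen_pow_le_four_mul_centralBinom_sq {k : ℕ} (hk : k ≠ 0) :
    16 ^ k ≤ 4 * k * k.centralBinom ^ 2 := by
  induction k with
  | zero => contradiction
  | succ k ih =>
    rcases eq_or_ne k 0 with rfl | hk
    · simp [Nat.centralBinom, Nat.choose]
    have hrec := Nat.succ_mul_centralBinom_succ k
    have hsq : 4 * k * (k + 1) ≤ (2 * k + 1) ^ 2 := by nlinarith
    refine le_of_mul_le_mul_right ?_ k.succ_pos
    calc 16 ^ (k + 1) * (k + 1) = 16 * 16 ^ k * (k + 1) := by ring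
      _ ≤ 16 * (4 * k * k.centralBinom ^ 2) * (k + 1) := by gcongr; exact ih hk
      _ = 16 * (4 * k * (k + 1)) * k.centralBinom ^ 2 := by ring
      _ ≤ 16 * (2 * k + 1) ^ 2 * k.centralBinom ^ 2 := by gcongr
      _ = 4 * (k + 1) * (k + 1).centralBinom ^ 2 * (k + 1) := by
        rw [show 4 * (k + 1) * (k + 1).centralBinom ^ 2 * (k + 1)
          = 4 * ((k + 1) * (k + 1).centralBinom) ^ 2 by ring, hrec]
        ring

lemma four_pow_mul_le_two_mul_absSignSum_sq (n : ℕ) : 4 ^ n * n ≤ 2 * absSignSum n ^ 2 := by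
  obtain ⟨k, rfl | rfl⟩ := Nat.even_or_odd' n
  · rcases eq_or_ne k 0 with rfl | hk
    · simp
    calc 4 ^ (2 * k) * (2 * k) = 2 * k * 16 ^ k := by rw [pow_mul]; ring
      _ ≤ 2 * k * (4 * k * k.centralBinom ^ 2) := by
        gcongr; exact sixteen_pow_le_four_mul_centralBinom_sq hk
      _ = 2 * absSignSum (2 * k) ^ 2 := by rw [(absSignSum_two_mul k).1]; ring
  · have h : 16 ^ k ≤ 2 * (2 * k + 1) * k.centralBinom ^ 2 := by
      rcases eq_or_ne k 0 with rfl | hk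
      · simp
      exact (sixteen_pow_le_four_mul_centralBinom_sq hk).trans (Nat.mul_le_mul_right _ (by omega))
    calc 4 ^ (2 * k + 1) * (2 * k + 1) = 4 * (2 * k + 1) * 16 ^ k := by
          rw [pow_succ, pow_mul]; ring
      _ ≤ 4 * (2 * k + 1) * (2 * (2 * k + 1) * k.centralBinom ^ 2) := by gcongr
      _ = 2 * absSignSum (2 * k + 1) ^ 2 := by rw [(absSignSum_two_mul k).2]; ring

lemma natCast_mul_two_pow_le_absSignSum_mul_sqrt (n : ℕ) :
    (n : ℝ) * 2 ^ n ≤ absSignSum n * √(2 * n) := by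
  have h : (4 : ℝ) ^ n * n ≤ 2 * absSignSum n ^ 2 := by
    exact_mod_cast four_pow_mul_le_two_mul_absSignSum_sq n
  refine (pow_le_pow_iff_left₀ (by positivity) (by positivity) two_ne_zero).mp ?_
  rw [mul_pow, mul_pow, Real.sq_sqrt (by positivity), ← pow_mul, mul_comm n 2, pow_mul]
  norm_num
  nlinarith [mul_le_mul_of_nonneg_left h (Nat.cast_nonneg (α := ℝ) n)]

end signSum

section khintchine

variable {n : ℕ}

lemma sum_signVec (t : Finset (Fin n)) : ∑ i, signVec t i = 2 * #t - n := by
  have h : ∀ i, signVec t i = 2 * (if i ∈ t then 1 else 0) - 1 := fun i => by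
    unfold signVec; split_ifs <;> norm_num
  simp [h, sum_sub_distrib]
  ring

def rademacherSum (a : Fin n → ℝ) : ℝ := ∑ t : Finset (Fin n), |∑ i, signVec t i * a i|

lemma rademacherSum_one : rademacherSum (fun _ : Fin n => (1 : ℝ)) = absSignSum n := by
  simp_rw [rademacherSum, mul_one, sum_signVec]
  rw [← powerset_univ, sum_powerset_apply_card (fun m => |2 * (m : ℝ) - n|), absSignSum,
    Nat.cast_sum, sum_powerset_apply_card (fun m => (((2 * (m : ℤ) - n).natAbs : ℕ) : ℝ))]
  simp [Nat.cast_natAbs]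

lemma rademacherSum_comp_perm (a : Fin n → ℝ) (σ : Equiv.Perm (Fin n)) :
    rademacherSum (a ∘ σ) = rademacherSum a := by
  refine Fintype.sum_equiv (Equiv.finsetCongr σ) _ _ fun t => congrArg _ ?_
  exact Fintype.sum_equiv σ _ _ fun i => by simp [signVec]

lemma rademacherSum_abs (a : Fin n → ℝ) : rademacherSum (fun i => |a i|) = rademacherSum a := by
  let N : Finset (Fin n) := {i | a i < 0}
  refine Fintype.sum_bijective (symmDiff · N)
    (Function.Involutive.bijective fun t => symmDiff_symmDiff_cancel_right N t) _ _
    fun t => congrArg _ ?_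
  refine sum_congr rfl fun i _ => ?_
  by_cases ha : a i < 0 <;> by_cases ht : i ∈ t <;>
    simp [signVec, N, mem_symmDiff, ha, ht, abs_of_neg, abs_of_nonneg, le_of_not_gt]

lemma sum_mul_rademacherSum_one_le [NeZero n] (a : Fin n → ℝ) (ha : ∀ i, 0 ≤ a i) :
    (∑ i, a i) * rademacherSum (fun _ : Fin n => (1 : ℝ)) ≤ n * rademacherSum a := by
  calc (∑ i, a i) * rademacherSum (fun _ => 1)
      = ∑ t : Finset (Fin n), |∑ c, ∑ i, signVec t i * a (i + c)| := by
        rw [rademacherSum, mul_sum]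
        refine sum_congr rfl fun t _ => ?_
        have hshift : ∀ i, ∑ c, a (i + c) = ∑ c, a c := fun i => Equiv.sum_comp (Equiv.addLeft i) a
        rw [sum_comm]
        simp_rw [mul_one, ← mul_sum, hshift, ← sum_mul, abs_mul,
          abs_of_nonneg (sum_nonneg fun i _ => ha i), mul_comm]
    _ ≤ ∑ t : Finset (Fin n), ∑ c, |∑ i, signVec t i * a (i + c)| :=
        sum_le_sum fun t _ => abs_sum_le_sum_abs _ _
    _ = ∑ c, rademacherSum (a ∘ Equiv.addRight c) := sum_comm
    _ = n * rademacherSum a := by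
        rw [sum_congr rfl fun c _ => rademacherSum_comp_perm a (Equiv.addRight c)]
        simp

lemma absSignSum_mul_sum_abs_le [NeZero n] (a : Fin n → ℝ) :
    absSignSum n * ∑ i, |a i| ≤ n * rademacherSum a := by
  have := sum_mul_rademacherSum_one_le (fun i => |a i|) fun i => abs_nonneg _
  rwa [rademacherSum_abs, rademacherSum_one, mul_comm] at this

end khintchine

section norming

variable {n : ℕ} {p : ℝ≥0∞}

/-- Norming sets for `ℓ₁^n(ℓ₁^κ)`; the uniformity in `κ` lets them be applied to one slot of a
tensor at a time. -/
def IsL1Norming (G : Finset (Fin n → ℝ)) (C : ℝ) : Prop :=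
  ∀ (κ : Type) [Fintype κ] (M : Fin n → κ → ℝ) (v : ℝ),
    (∀ x ∈ G, ∑ k, |∑ i, x i * M i k| ≤ v) → ∑ i, ∑ k, |M i k| ≤ C * v

lemma IsL1Norming.mono {G G' : Finset (Fin n → ℝ)} {C C' : ℝ} (h : IsL1Norming G C)
    (hG : G.Nonempty) (hGG' : G ⊆ G') (hCC' : C ≤ C') : IsL1Norming G' C' := by
  intro κ _ M v hv
  obtain ⟨x, hx⟩ := hG
  have hv0 : 0 ≤ v := (sum_nonneg fun k _ => abs_nonneg _).trans (hv x (hGG' hx))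
  exact (h κ M v fun x hx => hv x (hGG' hx)).trans (mul_le_mul_of_nonneg_right hCC' hv0)

variable (n) in
noncomputable def basisTests : Finset (Fin n → ℝ) := univ.image fun i => Pi.single i 1

variable (n p) in
noncomputable def signTests : Finset (Fin n → ℝ) :=
  univ.image fun t => ((n : ℝ) ^ (1 / p).toReal)⁻¹ • signVec t

variable (n p) in
noncomputable def unitTests : Finset (Fin n → ℝ) := signTests n p ∪ basisTests n

lemma isL1Norming_basisTests : IsL1Norming (basisTests n) n := by
  intro κ _ M v hv
  have h : ∀ i₀, ∑ k, |M i₀ k| ≤ v := fun i₀ => by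
    simpa [Pi.single_apply] using hv _ (mem_image_of_mem _ (mem_univ i₀))
  simpa using sum_le_sum fun i (_ : i ∈ univ) => h i

lemma isL1Norming_signTests (hn : n ≠ 0) :
    IsL1Norming (signTests n p) (√(2 * n) * (n : ℝ) ^ (1 / p).toReal) := by
  have : NeZero n := ⟨hn⟩
  intro κ _ M v hv
  have hc : 0 < (n : ℝ) ^ (1 / p).toReal := by positivity
  have hsign : ∀ t, ∑ k, |∑ i, signVec t i * M i k| ≤ (n : ℝ) ^ (1 / p).toReal * v := fun t => by
    have := hv _ (mem_image_of_mem _ (mem_univ t))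
    simp only [Pi.smul_apply, smul_eq_mul, mul_assoc, ← mul_sum, abs_mul,
      abs_of_pos (inv_pos.2 hc)] at this
    rwa [inv_mul_le_iff₀ hc] at this
  set c := (n : ℝ) ^ (1 / p).toReal
  have hv0 : 0 ≤ c * v := (sum_nonneg fun k _ => abs_nonneg _).trans (hsign ∅)
  have hT : (0 : ℝ) < absSignSum n :=
    pos_of_mul_pos_left ((by positivity : (0 : ℝ) < n * 2 ^ n).trans_le
      (natCast_mul_two_pow_le_absSignSum_mul_sqrt n)) (Real.sqrt_nonneg _)
  refine le_of_mul_le_mul_left ?_ hT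
  calc (absSignSum n : ℝ) * ∑ i, ∑ k, |M i k|
      = ∑ k, absSignSum n * ∑ i, |M i k| := by rw [sum_comm, mul_sum]
    _ ≤ ∑ k, n * rademacherSum (M · k) :=
        sum_le_sum fun k _ => absSignSum_mul_sum_abs_le _
    _ = n * ∑ t : Finset (Fin n), ∑ k, |∑ i, signVec t i * M i k| := by
        rw [← mul_sum, sum_comm]; rfl
    _ ≤ n * ∑ _t : Finset (Fin n), c * v := by gcongr with t; exact hsign t
    _ = n * 2 ^ n * (c * v) := by simp [mul_assoc]
    _ ≤ absSignSum n * √(2 * n) * (c * v) :=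
        mul_le_mul_of_nonneg_right (natCast_mul_two_pow_le_absSignSum_mul_sqrt n) hv0
    _ = absSignSum n * (√(2 * n) * c * v) := by ring

lemma isL1Norming_unitTests (hn : n ≠ 0) :
    IsL1Norming (unitTests n p) (√2 * (n : ℝ) ^ (1 / 2 + min (1 / p).toReal (1 / 2))) := by
  have hn' : (0 : ℝ) < n := Nat.cast_pos.2 (Nat.pos_of_ne_zero hn)
  rcases le_total (1 / p).toReal (1 / 2) with hp | hp
  · refine (isL1Norming_signTests hn).mono (univ_nonempty.image _) subset_union_left ?_
    rw [min_eq_left hp, Real.rpow_add hn', ← Real.sqrt_eq_rpow, Real.sqrt_mul zero_le_two,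
      mul_assoc]
  · have : Nonempty (Fin n) := ⟨⟨0, Nat.pos_of_ne_zero hn⟩⟩
    refine isL1Norming_basisTests.mono (univ_nonempty.image _) subset_union_right ?_
    rw [min_eq_right hp, show (1 / 2 + 1 / 2 : ℝ) = 1 by norm_num, Real.rpow_one]
    exact le_mul_of_one_le_left hn'.le (by norm_num)

lemma pnorm_of_mem_unitTests (hp : p ≠ 0) (hn : n ≠ 0) {x : Fin n → ℝ} (hx : x ∈ unitTests n p) :
    pnorm p x = 1 := by
  rcases mem_union.1 hx with hx | hx <;> obtain ⟨_, -, rfl⟩ := mem_image.1 hx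
  · have : (0 : ℝ) < (n : ℝ) ^ (1 / p).toReal := by positivity
    rw [pnorm_smul hp, pnorm_signVec hn, abs_of_pos (inv_pos.2 this), inv_mul_cancel₀ this.ne']
  · exact pnorm_single hp _

lemma sum_abs_le_of_forall_signTests (hn : n ≠ 0) {c : Fin n → ℝ} {v : ℝ}
    (h : ∀ z ∈ signTests n p, ∑ k, z k * c k ≤ v) :
    ∑ k, |c k| ≤ (n : ℝ) ^ (1 / p).toReal * v := by
  have : NeZero n := ⟨hn⟩
  have hc : 0 < (n : ℝ) ^ (1 / p).toReal := by positivity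
  have := h _ (mem_image_of_mem _ (mem_univ ({k | 0 ≤ c k} : Finset (Fin n))))
  simp only [Pi.smul_apply, smul_eq_mul, mul_assoc, ← mul_sum] at this
  rw [inv_mul_le_iff₀ hc] at this
  refine le_of_eq_of_le (sum_congr rfl fun k _ => ?_) this
  by_cases hk : 0 ≤ c k <;> simp [signVec, hk, abs_of_nonneg, abs_of_neg, not_le.1]

end norming

section dual

variable {n : ℕ} {r : ℝ≥0∞}

lemma sum_abs_le_of_forall_tmul3_le (hn : n ≠ 0) {Gp Gq : Finset (Fin n → ℝ)} {Cp Cq : ℝ}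
    (hGp : IsL1Norming Gp Cp) (hGq : IsL1Norming Gq Cq) (B : Fin n → Fin n → Fin n → ℝ) {u : ℝ}
    (h : ∀ x ∈ Gp, ∀ y ∈ Gq, ∀ z ∈ signTests n r,
      ∑ i, ∑ j, ∑ k, tmul3 x y z i j k * B i j k ≤ u) :
    ∑ i, ∑ j, ∑ k, |B i j k| ≤ Cp * (Cq * ((n : ℝ) ^ (1 / r).toReal * u)) := by
  have hz : ∀ x ∈ Gp, ∀ y ∈ Gq,
      ∑ k, |∑ j, y j * ∑ i, x i * B i j k| ≤ (n : ℝ) ^ (1 / r).toReal * u := fun x hx y hy =>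
    sum_abs_le_of_forall_signTests hn fun z hz => (h x hx y hy z hz).trans_eq' <| by
      simp only [tmul3, mul_sum]
      rw [sum_comm]
      conv_lhs => enter [2, j]; rw [sum_comm]
      rw [sum_comm]
      exact sum_congr rfl fun i _ => sum_congr rfl fun j _ => sum_congr rfl fun k _ => by ring
  have hy : ∀ x ∈ Gp, ∑ j, ∑ k, |∑ i, x i * B i j k| ≤ Cq * ((n : ℝ) ^ (1 / r).toReal * u) :=
    fun x hx => hGq (Fin n) (fun j k => ∑ i, x i * B i j k) _ (hz x hx)
  have hx := hGp (Fin n × Fin n) (fun i jk => B i jk.1 jk.2) _ fun x hx => by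
    rw [Fintype.sum_prod_type]; exact hy x hx
  simpa only [Fintype.sum_prod_type] using hx

end dual

section cube

variable {n : ℕ} {p q r : ℝ≥0∞}

noncomputable def cubeExponent (p q r : ℝ≥0∞) : ℝ :=
  min (1 / p).toReal (1 / 2) + min (1 / q).toReal (1 / 2) + (1 / r).toReal + 1

lemma one_le_cubeExponent (p q r : ℝ≥0∞) : 1 ≤ cubeExponent p q r := by
  unfold cubeExponent
  have := le_min (ENNReal.toReal_nonneg (a := 1 / p)) (by norm_num : (0 : ℝ) ≤ 1 / 2)
  have := le_min (ENNReal.toReal_nonneg (a := 1 / q)) (by norm_num : (0 : ℝ) ≤ 1 / 2)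
  linarith [ENNReal.toReal_nonneg (a := 1 / r)]

variable (n p q r) in
noncomputable def cubeGenerators : Finset (Fin n → Fin n → Fin n → ℝ) :=
  (unitTests n p ×ˢ unitTests n q ×ˢ signTests n r).image fun w => tmul3 w.1 w.2.1 w.2.2

lemma mem_convexHull_cubeGenerators (hn : n ≠ 0) {A : Fin n → Fin n → Fin n → ℝ}
    (hA : ∀ i j k, |A i j k| ≤ (2 * (n : ℝ) ^ cubeExponent p q r)⁻¹) :
    A ∈ convexHull ℝ (cubeGenerators n p q r : Set (Fin n → Fin n → Fin n → ℝ)) := by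
  have hn' : (0 : ℝ) < n := Nat.cast_pos.2 (Nat.pos_of_ne_zero hn)
  refine mem_convexHull_of_forall_le fun f u hf => ?_
  set B := fun i j k => f (tmul3 (Pi.single i 1) (Pi.single j 1) (Pi.single k 1))
  have hB := sum_abs_le_of_forall_tmul3_le hn (isL1Norming_unitTests (p := p) hn)
    (isL1Norming_unitTests (p := q) hn) B (r := r) (u := u) fun x hx y hy z hz => by
      rw [← strongDual_apply_eq_sum]
      exact hf _ (mem_image_of_mem _ (mk_mem_product hx (mk_mem_product hy hz)))
  have hconst : √2 * (n : ℝ) ^ (1 / 2 + min (1 / p).toReal (1 / 2)) *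
      (√2 * (n : ℝ) ^ (1 / 2 + min (1 / q).toReal (1 / 2)) * ((n : ℝ) ^ (1 / r).toReal * u))
      = 2 * (n : ℝ) ^ cubeExponent p q r * u := by
    rw [show ∀ a b c d : ℝ, √2 * a * (√2 * b * (c * d)) = (√2 * √2) * (a * b * c) * d by
        intros; ring, Real.mul_self_sqrt zero_le_two, ← Real.rpow_add hn', ← Real.rpow_add hn',
      cubeExponent]
    ring_nf
  rw [hconst] at hB
  calc f A = ∑ i, ∑ j, ∑ k, A i j k * B i j k := strongDual_apply_eq_sum f A
    _ ≤ ∑ i, ∑ j, ∑ k, (2 * (n : ℝ) ^ cubeExponent p q r)⁻¹ * |B i j k| :=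
        sum_le_sum fun i _ => sum_le_sum fun j _ => sum_le_sum fun k _ => (le_abs_self _).trans <|
          (abs_mul _ _).trans_le (mul_le_mul_of_nonneg_right (hA i j k) (abs_nonneg _))
    _ = (2 * (n : ℝ) ^ cubeExponent p q r)⁻¹ * ∑ i, ∑ j, ∑ k, |B i j k| := by simp only [mul_sum]
    _ ≤ (2 * (n : ℝ) ^ cubeExponent p q r)⁻¹ * (2 * (n : ℝ) ^ cubeExponent p q r * u) := by
        gcongr
    _ = u := by field_simp

lemma projNorm3_le_one_of_forall_abs_le (hp : p ≠ 0) (hq : q ≠ 0) (hr : r ≠ 0) (hn : n ≠ 0)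
    {A : Fin n → Fin n → Fin n → ℝ}
    (hA : ∀ i j k, |A i j k| ≤ (2 * (n : ℝ) ^ cubeExponent p q r)⁻¹) :
    projNorm3 p q r A ≤ 1 := by
  refine projNorm3_le_one_of_mem_convexHull hp (fun s hs => ?_)
    (mem_convexHull_cubeGenerators hn hA)
  obtain ⟨⟨x, y, z⟩, hxyz, rfl⟩ := mem_image.1 hs
  simp only [mem_product] at hxyz
  refine ⟨x, y, z, rfl, le_of_eq ?_⟩
  rw [pnorm_of_mem_unitTests hp hn hxyz.1, pnorm_of_mem_unitTests hq hn hxyz.2.1,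
    pnorm_of_mem_unitTests hr hn (mem_union_left _ hxyz.2.2), one_mul, one_mul]

lemma volume_setOf_abs_le_rpow (hn : n ≠ 0) (ρ : ℝ) :
    volume {A : Fin n → Fin n → Fin n → ℝ | ∀ i j k, |A i j k| ≤ ρ} ^ ((1 : ℝ) / n ^ 3) =
      ENNReal.ofReal (2 * ρ) := by
  have hcube : {A : Fin n → Fin n → Fin n → ℝ | ∀ i j k, |A i j k| ≤ ρ} =
      Set.univ.pi fun _ => Set.univ.pi fun _ => Set.univ.pi fun _ => Set.Icc (-ρ) ρ := by
    ext A
    simp only [Set.mem_ofPred_eq, Set.mem_pi, Set.mem_univ, true_imp_iff, Set.mem_Icc, abs_le]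
  simp_rw [hcube, volume_pi_pi, Real.volume_Icc, prod_const, card_univ, Fintype.card_fin,
    ← pow_mul, sub_neg_eq_add, ← two_mul, ← ENNReal.rpow_natCast, ← ENNReal.rpow_mul]
  rw [show ((n * n * n : ℕ) : ℝ) * (1 / (n : ℝ) ^ 3) = 1 by
    field_simp [Nat.cast_ne_zero.2 hn]; push_cast; ring, ENNReal.rpow_one]

end cube

theorem stmt3 (n : ℕ) (p q r : ℝ≥0∞) (hp : 1 ≤ p) (hq : 1 ≤ q) (hr : 1 ≤ r) :
    (volume {A : Fin n → Fin n → Fin n → ℝ | projNorm3 p q r A ≤ 1}) ^ ((1 : ℝ) / n ^ 3) ≥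
      ENNReal.ofReal ((n : ℝ) ^
        (-min (1 / p).toReal (1 / 2) - min (1 / q).toReal (1 / 2) - (1 / r).toReal - 1)) := by
  have hexp : -min (1 / p).toReal (1 / 2) - min (1 / q).toReal (1 / 2) - (1 / r).toReal - 1 =
      -cubeExponent p q r := by
    rw [cubeExponent]; ring
  rw [hexp]
  rcases eq_or_ne n 0 with rfl | hn
  · simp [Real.zero_rpow (neg_ne_zero.2 (one_pos.trans_le (one_le_cubeExponent p q r)).ne')]
  have hsub : {A : Fin n → Fin n → Fin n → ℝ |
      ∀ i j k, |A i j k| ≤ (2 * (n : ℝ) ^ cubeExponent p q r)⁻¹} ⊆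
      {A | projNorm3 p q r A ≤ 1} := fun A hA =>
    projNorm3_le_one_of_forall_abs_le (one_pos.trans_le hp).ne' (one_pos.trans_le hq).ne'
      (one_pos.trans_le hr).ne' hn hA
  calc ENNReal.ofReal ((n : ℝ) ^ (-cubeExponent p q r))
      = volume {A : Fin n → Fin n → Fin n → ℝ |
          ∀ i j k, |A i j k| ≤ (2 * (n : ℝ) ^ cubeExponent p q r)⁻¹} ^ ((1 : ℝ) / n ^ 3) := by
        rw [volume_setOf_abs_le_rpow hn, mul_inv, mul_inv_cancel_left₀ two_ne_zero,
          Real.rpow_neg n.cast_nonneg]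
    _ ≤ _ := ENNReal.rpow_le_rpow (measure_mono hsub) (by positivity)
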